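/- The solution set of the Euler–Poisson equation 𝓔 = 0 is reparametrization invariant: if x : I → ℝ³ is a smooth curve on an open interval I with x′(ζ) ≠ 0 and 𝓔(x′(ζ), x″(ζ), x‴(ζ)) = 0 for all ζ ∈ I, and φ : J → I is smooth with φ′ > 0 on the open interval J, then the curve y = x ∘ φ satisfies y′(τ) ≠ 0 and 𝓔(y′(τ), y″(τ), y‴(τ)) = 0 for all τ ∈ J. -/

import Mathlib

noncomputable section
open RealInnerProductSpace

/-- Three-dimensional Euclidean space. -/
abbrev E3 := EuclideanSpace ℝ (Fin 3)

/-- The cross product on ℝ³. -/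
def cross (a b : E3) : E3 :=
  (WithLp.equiv 2 (Fin 3 → ℝ)).symm
    ![a 1 * b 2 - a 2 * b 1, a 2 * b 0 - a 0 * b 2, a 0 * b 1 - a 1 * b 0]

/-- The Euler–Poisson expression
𝓔(u, u̇, ü) = (ü × u)/‖u‖³ − 3((u̇·u)/‖u‖⁵)(u̇ × u) + (m/‖u‖³)(‖u‖² u̇ − (u̇·u) u). -/
def EP (m : ℝ) (u du ddu : E3) : E3 :=
  (‖u‖ ^ 3)⁻¹ • cross ddu u - (3 * ⟪du, u⟫ / ‖u‖ ^ 5) • cross du u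
    + (m / ‖u‖ ^ 3) • (‖u‖ ^ 2 • du - ⟪du, u⟫ • u)

lemma cross_add_left' (a b c : E3) : cross (a + b) c = cross a c + cross b c := by
  ext i; fin_cases i <;> simp [cross] <;> ring

lemma cross_smul_left' (r : ℝ) (a b : E3) : cross (r • a) b = r • cross a b := by
  ext i; fin_cases i <;> simp [cross] <;> ring

lemma cross_smul_right' (r : ℝ) (a b : E3) : cross a (r • b) = r • cross a b := by
  ext i; fin_cases i <;> simp [cross] <;> ring

lemma cross_self'' (a : E3) : cross a a = 0 := by
  ext i; fin_cases i <;> simp [cross] <;> ring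

lemma EP_scale (m l p q : ℝ) (hl : 0 < l) (u v w : E3) (hu : u ≠ 0) :
    EP m (l • u) (p • u + l ^ 2 • v) (q • u + (3 * l * p) • v + l ^ 3 • w)
      = l • EP m u v w := by
  have hn : ‖u‖ ≠ 0 := norm_ne_zero_iff.mpr hu
  have hl0 : l ≠ 0 := ne_of_gt hl
  have hnorm : ‖l • u‖ = l * ‖u‖ := by
    rw [norm_smul, Real.norm_eq_abs, abs_of_pos hl]
  simp only [EP, hnorm, cross_add_left', cross_smul_left', cross_smul_right',
    cross_self'', real_inner_smul_left, real_inner_smul_right, inner_add_left,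
    real_inner_self_eq_norm_sq, smul_zero, add_zero, zero_add, smul_smul,
    smul_add, smul_sub]
  match_scalars <;> field_simp <;> ring

lemma diffAt_aux {F : Type*} [NormedAddCommGroup F] [NormedSpace ℝ F]
    {f : ℝ → F} {s : Set ℝ} (hf : ContDiffOn ℝ (⊤ : ℕ∞) f s) (hs : IsOpen s)
    {z : ℝ} (hz : z ∈ s) : DifferentiableAt ℝ f z :=
  (hf.differentiableOn (by simp)).differentiableAt (hs.mem_nhds hz)

/-- the solution set of the Euler–Poisson equation 𝓔 = 0 is invariant
under orientation-preserving reparametrization. -/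
theorem EP_solution_reparametrization_invariant (m : ℝ)
    (a b : ℝ) (x : ℝ → E3) (hx : ContDiffOn ℝ (⊤ : ℕ∞) x (Set.Ioo a b))
    (hx' : ∀ ζ ∈ Set.Ioo a b, deriv x ζ ≠ 0)
    (hsol : ∀ ζ ∈ Set.Ioo a b,
      EP m (deriv x ζ) (deriv (deriv x) ζ) (deriv (deriv (deriv x)) ζ) = 0)
    (c d : ℝ) (φ : ℝ → ℝ) (hφ : ContDiffOn ℝ (⊤ : ℕ∞) φ (Set.Ioo c d))
    (hφmaps : Set.MapsTo φ (Set.Ioo c d) (Set.Ioo a b))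
    (hφ' : ∀ τ ∈ Set.Ioo c d, 0 < deriv φ τ) :
    ∀ τ ∈ Set.Ioo c d,
      deriv (x ∘ φ) τ ≠ 0 ∧
      EP m (deriv (x ∘ φ) τ) (deriv (deriv (x ∘ φ)) τ)
        (deriv (deriv (deriv (x ∘ φ))) τ) = 0 := by
  set s := Set.Ioo a b with hs_def
  set t := Set.Ioo c d with ht_def
  have hso : IsOpen s := isOpen_Ioo
  have hto : IsOpen t := isOpen_Ioo
  have hx1 : ContDiffOn ℝ (⊤ : ℕ∞) (deriv x) s := hx.deriv_of_isOpen hso (by simp)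
  have hx2 : ContDiffOn ℝ (⊤ : ℕ∞) (deriv (deriv x)) s := hx1.deriv_of_isOpen hso (by simp)
  have hφ1 : ContDiffOn ℝ (⊤ : ℕ∞) (deriv φ) t := hφ.deriv_of_isOpen hto (by simp)
  have hφ2 : ContDiffOn ℝ (⊤ : ℕ∞) (deriv (deriv φ)) t := hφ1.deriv_of_isOpen hto (by simp)
  -- first derivative formula, on all of t
  have h1 : ∀ τ ∈ t, deriv (x ∘ φ) τ = deriv φ τ • deriv x (φ τ) := fun τ hτ =>
    (HasDerivAt.scomp τ (diffAt_aux hx hso (hφmaps hτ)).hasDerivAt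
      (diffAt_aux hφ hto hτ).hasDerivAt).deriv
  -- HasDerivAt for the composed lower derivatives
  have hcomp1 : ∀ τ ∈ t, HasDerivAt (fun r => deriv x (φ r))
      (deriv φ τ • deriv (deriv x) (φ τ)) τ := by
    intro τ hτ
    have := HasDerivAt.scomp τ (diffAt_aux hx1 hso (hφmaps hτ)).hasDerivAt
      (diffAt_aux hφ hto hτ).hasDerivAt
    simpa [Function.comp_def] using this
  have hcomp2 : ∀ τ ∈ t, HasDerivAt (fun r => deriv (deriv x) (φ r))
      (deriv φ τ • deriv (deriv (deriv x)) (φ τ)) τ := by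
    intro τ hτ
    have := HasDerivAt.scomp τ (diffAt_aux hx2 hso (hφmaps hτ)).hasDerivAt
      (diffAt_aux hφ hto hτ).hasDerivAt
    simpa [Function.comp_def] using this
  -- second derivative formula, on all of t
  have h2 : ∀ τ ∈ t, deriv (deriv (x ∘ φ)) τ
      = deriv (deriv φ) τ • deriv x (φ τ)
        + (deriv φ τ) ^ 2 • deriv (deriv x) (φ τ) := by
    intro τ hτ
    have hev : deriv (x ∘ φ) =ᶠ[nhds τ] fun r => deriv φ r • deriv x (φ r) :=
      Filter.eventuallyEq_of_mem (hto.mem_nhds hτ) h1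
    rw [hev.deriv_eq]
    have hd : HasDerivAt (fun r => deriv φ r • deriv x (φ r))
        (deriv φ τ • (deriv φ τ • deriv (deriv x) (φ τ))
          + deriv (deriv φ) τ • deriv x (φ τ)) τ :=
      (diffAt_aux hφ1 hto hτ).hasDerivAt.smul (hcomp1 τ hτ)
    rw [hd.deriv]
    module
  intro τ hτ
  have hζ : φ τ ∈ s := hφmaps hτ
  set l := deriv φ τ with hl_def
  set p := deriv (deriv φ) τ
  set u := deriv x (φ τ) with hu_def
  set v := deriv (deriv x) (φ τ)
  set w := deriv (deriv (deriv x)) (φ τ)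
  have hlpos : 0 < l := hφ' τ hτ
  have hune : u ≠ 0 := hx' _ hζ
  -- third derivative
  have h3 : deriv (deriv (deriv (x ∘ φ))) τ
      = deriv (deriv (deriv φ)) τ • u + (3 * l * p) • v + l ^ 3 • w := by
    have hev : deriv (deriv (x ∘ φ)) =ᶠ[nhds τ]
        fun r => deriv (deriv φ) r • deriv x (φ r)
          + (deriv φ r) ^ 2 • deriv (deriv x) (φ r) :=
      Filter.eventuallyEq_of_mem (hto.mem_nhds hτ) h2
    rw [hev.deriv_eq]
    have hdA : HasDerivAt (fun r => deriv (deriv φ) r • deriv x (φ r))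
        (p • (l • v) + deriv (deriv (deriv φ)) τ • u) τ :=
      (diffAt_aux hφ2 hto hτ).hasDerivAt.smul (hcomp1 τ hτ)
    have hφ1sq : HasDerivAt (fun r => (deriv φ r) ^ 2)
        ((2 : ℕ) * l ^ 1 * p) τ :=
      (diffAt_aux hφ1 hto hτ).hasDerivAt.pow 2
    have hdB : HasDerivAt (fun r => (deriv φ r) ^ 2 • deriv (deriv x) (φ r))
        (l ^ 2 • (l • w) + ((2 : ℕ) * l ^ 1 * p) • v) τ :=
      hφ1sq.smul (hcomp2 τ hτ)
    rw [((hdA.add hdB) : HasDerivAt (fun r => _ + _) _ τ).deriv]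
    push_cast
    module
  refine ⟨?_, ?_⟩
  · rw [h1 τ hτ]
    exact smul_ne_zero (ne_of_gt hlpos) hune
  · rw [h1 τ hτ, h2 τ hτ, h3]
    rw [EP_scale m l p (deriv (deriv (deriv φ)) τ) hlpos u v w hune,
      hsol _ hζ, smul_zero]
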